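/- arXiv:1305.2855 — 2 statements merged into one kernel-verified Lean document; each statement's English description precedes it below -/
import Mathlib

section
/- For the Lie algebra g₅ with brackets [X,Z]=X, [Y,W]=Y and orthonormal basis {X,Y,Z,W}, the sectional curvature of the plane spanned by orthonormal vectors U = aX+bY+cZ+dW and V = a'X+b'Y+c'Z+d'W equals −{(ac'−ca')² + (bd'−db')²} ≤ 0, and the scalar curvature is the constant −4. -/
/-! The Koszul formula determines the connection completely:
`∇_u v = u₀v₂ X + u₁v₃ Y − u₀v₀ Z − u₁v₁ W`. Substituting this into `R` gives
`⟨R(v,u)u, v⟩ = −((u₀v₂ − u₂v₀)² + (u₁v₃ − u₃v₁)²) = −‖[u, v]‖²`, which for orthonormal `u, v`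
is the sectional curvature. On the orthonormal basis only the planes `XZ` and `YW` have nonzero
curvature, each `−1`, and each is counted twice in the scalar curvature. -/

open Real

abbrev V4 := Fin 4 → ℝ

/-- the inner product making the basis orthonormal -/
def ip (u v : V4) : ℝ := u 0 * v 0 + u 1 * v 1 + u 2 * v 2 + u 3 * v 3

def X : V4 := ![1, 0, 0, 0]
def Y : V4 := ![0, 1, 0, 0]
def Z : V4 := ![0, 0, 1, 0]
def W : V4 := ![0, 0, 0, 1]

def e : Fin 4 → V4 := ![X, Y, Z, W]

def br (u v : V4) : V4 := (u 0 * v 2 - u 2 * v 0) • X + (u 1 * v 3 - u 3 * v 1) • Y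

theorem ip_e (x : V4) (i : Fin 4) : ip x (e i) = x i := by
  fin_cases i <;> simp [ip, e, X, Y, Z, W]

section LeviCivita

variable (nabla : V4 → V4 → V4)
    (hK : ∀ u v w : V4, 2 * ip (nabla u v) w = ip (br u v) w - ip (br v w) u + ip (br w u) v)
include hK

theorem nabla_eq (u v : V4) :
    nabla u v = ![u 0 * v 2, u 1 * v 3, -(u 0 * v 0), -(u 1 * v 1)] := by
  funext i
  have h := hK u v (e i)
  rw [ip_e] at h
  fin_cases i <;> simp [ip, br, e, X, Y, Z, W] at h ⊢ <;> linarith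

variable (R : V4 → V4 → V4 → V4)
    (hR : ∀ u v w : V4, R u v w = nabla u (nabla v w) - nabla v (nabla u w) - nabla (br u v) w)
include hR

theorem ip_curvature_eq (u v : V4) :
    ip (R v u u) v = -((u 0 * v 2 - u 2 * v 0) ^ 2 + (u 1 * v 3 - u 3 * v 1) ^ 2) := by
  simp only [hR, nabla_eq nabla hK]
  simp [ip, br, X, Y]
  ring

end LeviCivita

theorem stmt11 (nabla : V4 → V4 → V4)
    (hK : ∀ u v w : V4, 2 * ip (nabla u v) w = ip (br u v) w - ip (br v w) u + ip (br w u) v)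
    (R : V4 → V4 → V4 → V4)
    (hR : ∀ u v w : V4, R u v w = nabla u (nabla v w) - nabla v (nabla u w) - nabla (br u v) w)
    (a b c d a' b' c' d' : ℝ) (u v : V4)
    (hu : u = a • X + b • Y + c • Z + d • W)
    (hv : v = a' • X + b' • Y + c' • Z + d' • W)
    (huu : ip u u = 1) (hvv : ip v v = 1) (huv : ip u v = 0) :
    ip (R v u u) v / (ip u u * ip v v - ip u v ^ 2) = -((a * c' - c * a') ^ 2 + (b * d' - d * b') ^ 2) ∧
    ip (R v u u) v / (ip u u * ip v v - ip u v ^ 2) ≤ 0 ∧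
    (∑ j : Fin 4, ∑ k : Fin 4, if j ≠ k then ip (R (e k) (e j) (e j)) (e k) / (ip (e j) (e j) * ip (e k) (e k) - ip (e j) (e k) ^ 2) else 0) = -4 := by
  have hcurv := ip_curvature_eq nabla hK R hR
  have hsec : ip (R v u u) v / (ip u u * ip v v - ip u v ^ 2) =
      -((a * c' - c * a') ^ 2 + (b * d' - d * b') ^ 2) := by
    rw [huu, hvv, huv, hcurv, hu, hv]
    simp [X, Y, Z, W]
  refine ⟨hsec, hsec ▸ neg_nonpos.mpr (by positivity), ?_⟩
  simp only [Fin.sum_univ_four, hcurv]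
  simp [e, ip, X, Y, Z, W]
  norm_num
end

section
/- In the Lie algebra g₅ with brackets [X,Z]=X, [Y,W]=Y, the only vector Q ∈ g₅ satisfying ∇_U Q = 0 for all U ∈ g₅ is Q = 0; i.e., the Levi-Civita connection admits no nonzero parallel left invariant vector field. -/
open Real

theorem stmt17 (nabla : V4 → V4 → V4)
    (hK : ∀ u v w : V4, 2 * ip (nabla u v) w = ip (br u v) w - ip (br v w) u + ip (br w u) v)
    (Q : V4) :
    (∀ u : V4, nabla u Q = 0) ↔ Q = 0 := by
  constructor
  · intro h
    have h1 := hK X Q Z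
    have h2 := hK Y Q W
    have h3 := hK X Q X
    have h4 := hK Y Q Y
    rw [h X] at h1 h3
    rw [h Y] at h2 h4
    simp [ip, br, X, Y, Z, W] at h1 h2 h3 h4
    funext i
    fin_cases i <;> simp <;> linarith
  · intro hq u
    subst hq
    have key : ∀ w, 2 * ip (nabla u 0) w = 0 := by
      intro w
      have := hK u 0 w
      simpa [ip, br, X, Y] using this
    have hn := key (nabla u 0)
    simp [ip] at hn
    funext i
    fin_cases i <;> simp <;> nlinarith [sq_nonneg (nabla u 0 0), sq_nonneg (nabla u 0 1), sq_nonneg (nabla u 0 2), sq_nonneg (nabla u 0 3)]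
end
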